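/- Let k ≥ 7 be an odd integer. Both P ∪ {e_1, e_2} and Q ∪ {e_1, e_2} are free bases of the matroid N_k. -/

import Mathlib

open Set

namespace Matroid

variable {α : Type}

/-- Deletion of a set from a matroid. -/
def delete' (M : Matroid α) (D : Set α) : Matroid α := M ↾ (M.E \ D)

/-- Contraction of a set in a matroid. -/
def contract' (M : Matroid α) (C : Set α) : Matroid α := (M✶.delete' C)✶

/-- A circuit: a minimal dependent set. -/
def IsCircuit' (M : Matroid α) (C : Set α) : Prop :=
  M.Dep C ∧ ∀ D, D ⊂ C → M.Indep D

/-- A cocircuit: a circuit of the dual. -/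
def IsCocircuit' (M : Matroid α) (C : Set α) : Prop := M✶.IsCircuit' C

/-- A hyperplane: a flat whose rank is one less than the rank of the matroid. -/
def IsHyperplane (M : Matroid α) (H : Set α) : Prop :=
  M.IsFlat H ∧ ∃ I B, M.IsBasis I H ∧ M.IsBase B ∧ I.encard + 1 = B.encard

/-- A circuit-hyperplane: a set that is both a circuit and a hyperplane. -/
def IsCircuitHyperplane (M : Matroid α) (C : Set α) : Prop :=
  M.IsCircuit' C ∧ M.IsHyperplane C

/-- A free basis: a basis `B` such that `B ∪ {e}` is a circuit for every `e ∈ E(M) - B`. -/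
def IsFreeBase (M : Matroid α) (B : Set α) : Prop :=
  M.IsBase B ∧ ∀ e ∈ M.E \ B, M.IsCircuit' (insert e B)

/-- A connected matroid: the ground set is nonempty and every two distinct elements of the
ground set lie in a common circuit. -/
def IsConnected (M : Matroid α) : Prop :=
  M.E.Nonempty ∧ ∀ x ∈ M.E, ∀ y ∈ M.E, x ≠ y → ∃ C, M.IsCircuit' C ∧ x ∈ C ∧ y ∈ C

/-- `M` is a frame matroid: there is a matroid `M'` whose ground set is the union of (a copy of)
`E(M)` and a set `V` disjoint from it, such that `V` is a basis of `M'`, deleting `V` from `M'`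
yields (the copy of) `M`, and for every `e ∈ E(M)` the unique circuit of `M'` contained in
`V ∪ {e}` has at most three elements. -/
def IsFrame (M : Matroid α) : Prop :=
  ∃ (β : Type) (M' : Matroid (α ⊕ β)) (V : Set (α ⊕ β)),
    M'.Finite ∧
    M'.E = (Sum.inl '' M.E) ∪ V ∧
    Disjoint (Sum.inl '' M.E) V ∧
    M'.IsBase V ∧
    M'.delete' V = M.map Sum.inl Sum.inl_injective.injOn ∧
    ∀ e ∈ M.E, ∃ C, M'.IsCircuit' C ∧ C ⊆ insert (Sum.inl e) V ∧ C.encard ≤ 3 ∧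
      ∀ C', M'.IsCircuit' C' → C' ⊆ insert (Sum.inl e) V → C' = C

/-- `N` is a graphic matroid: there are a set `W` of vertices and an assignment of an unordered
pair of vertices to each element of the ground set, such that a subset `I` of the ground set is
independent exactly when every nonempty `J ⊆ I` uses strictly more vertices than it has edges
(i.e. the associated multigraph is a forest). -/
def IsGraphic (N : Matroid α) : Prop :=
  ∃ (W : Type) (f : α → Sym2 W),
    ∀ I : Set α, N.Indep I ↔ (I ⊆ N.E ∧ ∀ J ⊆ I, J.Nonempty →
      J.encard < {w : W | ∃ e ∈ J, w ∈ f e}.encard)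

/-- `M` is a lifted-graphic matroid: there is a matroid `M'` whose ground set is (a copy of)
`E(M)` plus one extra element `f`, such that `M' \ f = M` and `M' / f` is graphic. -/
def IsLiftedGraphic (M : Matroid α) : Prop :=
  ∃ M' : Matroid (α ⊕ Unit),
    M'.Finite ∧
    M'.E = (Sum.inl '' M.E) ∪ {Sum.inr ()} ∧
    M'.delete' {Sum.inr ()} = M.map Sum.inl Sum.inl_injective.injOn ∧
    (M'.contract' {Sum.inr ()}).IsGraphic

/-- `M` and `N` are isomorphic matroids. -/
def Iso' {β : Type} (M : Matroid α) (N : Matroid β) : Prop :=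
  ∃ (f : α → β) (hf : Set.InjOn f M.E), M.map f hf = N

end Matroid

section Graphs

/-- The edges of the graph `G_k`: `a i`, `b i`, `c i`, `d i` for `i : Fin k`
(with `i` representing the index `i+1` of the paper), together with `e1` and `e2`. -/
inductive Edge (k : ℕ) : Type where
  | a : Fin k → Edge k
  | b : Fin k → Edge k
  | c : Fin k → Edge k
  | d : Fin k → Edge k
  | e1 : Edge k
  | e2 : Edge k
deriving DecidableEq

/-- The vertices of `G_k`: `Sum.inl (i, false)` is `x_{i+1}` (so `Sum.inl (0, false)` is `s_1`),
`Sum.inl (i, true)` is `y_{i+1}` (so `Sum.inl (0, true)` is `s_2`), `Sum.inr false` is `t_1` and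
`Sum.inr true` is `t_2`.  There are `2k+2` vertices in all. -/
abbrev Vertex (k : ℕ) := (Fin k × Bool) ⊕ Bool

variable {k : ℕ}

/-- The tail of each edge of `G_k`. -/
def Edge.tail [NeZero k] : Edge k → Vertex k
  | .a i => .inl (i, false)
  | .b i => .inl (i, false)
  | .c i => .inl (i, true)
  | .d i => .inl (i, true)
  | .e1 => .inl (0, false)
  | .e2 => .inl (0, true)

/-- The head of each edge of `G_k`; the head `x_1` is the vertex `t_1 = Sum.inr false` and
the head `y_1` is the vertex `t_2 = Sum.inr true`. -/
def Edge.head [NeZero k] : Edge k → Vertex k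
  | .a i => if i + 1 = 0 then .inr false else .inl (i + 1, false)
  | .b i => if i + 1 = 0 then .inr true else .inl (i + 1, true)
  | .c i => if i + 1 = 0 then .inr false else .inl (i + 1, false)
  | .d i => if i + 1 = 0 then .inr true else .inl (i + 1, true)
  | .e1 => .inr false
  | .e2 => .inr true

/-- The set `P = {a_1, …, a_k, d_1, …, d_k}`. -/
def Pset (k : ℕ) : Set (Edge k) := {e | ∃ i, e = .a i ∨ e = .d i}

/-- The set `Q = {b_1, …, b_k, c_1, …, c_k}`. -/
def Qset (k : ℕ) : Set (Edge k) := {e | ∃ i, e = .b i ∨ e = .c i}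

/-- The last index of `Fin k`, representing the paper's index `k`. -/
def lastIdx (k : ℕ) [NeZero k] : Fin k :=
  ⟨k - 1, Nat.sub_lt (Nat.pos_of_ne_zero (NeZero.ne k)) Nat.one_pos⟩

/-- The group labels for the frame construction: `γ(a_k) = γ(b_k) = γ(c_k) = γ(d_k) = 2` and
`γ(e) = 1` for every other edge. -/
def gammaF [NeZero k] : Edge k → ℝ
  | .a i => if i = lastIdx k then 2 else 1
  | .b i => if i = lastIdx k then 2 else 1
  | .c i => if i = lastIdx k then 2 else 1
  | .d i => if i = lastIdx k then 2 else 1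
  | .e1 => 1
  | .e2 => 1

/-- The matrix `A_k` of the frame construction, with rows indexed by the vertices of `G_k` and
columns by its edges: the column of an edge `e` has entry `1` in the row of the tail of `e`,
entry `-γ(e)` in the row of the head of `e`, and `0` elsewhere. -/
def frameMatrix (k : ℕ) [NeZero k] : Matrix (Vertex k) (Edge k) ℝ :=
  fun v e => if v = e.tail then 1 else if v = e.head then -gammaF e else 0

/-- The group labels for the lifted construction: `γ(a_i) = γ(d_i) = 1` for all `i` and
`γ(e) = 0` for every other edge. -/
def gammaL : Edge k → ℝ
  | .a _ => 1
  | .d _ => 1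
  | _ => 0

/-- The matrix `A_k^L` of the lifted construction, with rows indexed by the vertices of `G_k`
together with one additional row: the column of an edge `e` has entry `1` in the row of the tail
of `e`, entry `-1` in the row of the head of `e`, entry `γ(e)` in the additional row, and `0`
elsewhere. -/
def liftMatrix (k : ℕ) [NeZero k] : Matrix (Vertex k ⊕ Unit) (Edge k) ℝ :=
  fun v e => match v with
  | .inl v => if v = e.tail then 1 else if v = e.head then -1 else 0
  | .inr _ => gammaL e

/-- `N` is the matroid on the column index set of the matrix `A` in which a set is independent
if and only if the corresponding columns of `A` are linearly independent over `ℝ`. -/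
def IsColMatroid {m n : Type} (A : Matrix m n ℝ) (N : Matroid n) : Prop :=
  N.E = Set.univ ∧
  ∀ I : Set n, N.Indep I ↔ LinearIndependent ℝ (fun e : I => fun v : m => A v (e : n))

/-- The vertex of the contracted graph `G_k / {e_1, e_2}` corresponding to a vertex of `G_k`:
`t_1` is identified with `s_1` and `t_2` with `s_2`, leaving the `2k` vertices `Fin k × Bool`. -/
def contractVertex [NeZero k] : Vertex k → Fin k × Bool
  | .inl p => p
  | .inr b => (0, b)

/-- The tail, in `G_k / {e_1, e_2}`, of an edge. -/
def Edge.ctail [NeZero k] (e : Edge k) : Fin k × Bool := contractVertex e.tail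

/-- The head, in `G_k / {e_1, e_2}`, of an edge. -/
def Edge.chead [NeZero k] (e : Edge k) : Fin k × Bool := contractVertex e.head

/-- `v` is a vertex of the subgraph of `G_k / {e_1, e_2}` formed by the edge set `S`. -/
def Touches [NeZero k] (S : Set (Edge k)) (v : Fin k × Bool) : Prop :=
  ∃ e ∈ S, e.ctail = v ∨ e.chead = v

/-- The degree of the vertex `v` in the subgraph of `G_k / {e_1, e_2}` with edge set `S`. -/
noncomputable def degreeIn [NeZero k] (S : Set (Edge k)) (v : Fin k × Bool) : ℕ :=
  {e ∈ S | e.ctail = v}.ncard + {e ∈ S | e.chead = v}.ncard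

/-- The edge set `S` forms a cycle of the multigraph `G_k / {e_1, e_2}`: the subgraph it
spans is connected and `2`-regular. -/
def IsCycleIn [NeZero k] (S : Set (Edge k)) : Prop :=
  S.Nonempty ∧ Edge.e1 ∉ S ∧ Edge.e2 ∉ S ∧
  (∀ v, Touches S v → degreeIn S v = 2) ∧
  (∀ T ⊆ S, T.Nonempty → (S \ T).Nonempty → ∃ v, Touches T v ∧ Touches (S \ T) v)

/-- The star `δ_G(v)` of a vertex `v` of the contracted graph `G_k / {e_1, e_2}`:
all edges of that graph incident with `v`. -/
def contractStar (k : ℕ) [NeZero k] (v : Fin k × Bool) : Set (Edge k) :=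
  {e | e ≠ .e1 ∧ e ≠ .e2 ∧ (e.ctail = v ∨ e.chead = v)}

/-- The star `δ(v)` of a vertex `v` of the graph `G_k`: all edges of `G_k` incident with `v`. -/
def star (k : ℕ) [NeZero k] (v : Vertex k) : Set (Edge k) :=
  {e | e.tail = v ∨ e.head = v}

end Graphs

/-!
A set `B` of as many edges as `G_k` has vertices is a free basis of `N_k` as soon as every
`b ∈ B` has a row vector `w_b` with `w_b A_k e = [b = e]` for `e ∈ B` and `w_b A_k x ≠ 0` for
`x ∉ B`. The `w_b` make `B` independent, hence a basis; and `w_b A_k x` is the coefficient of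
`b` in the expansion of the column of `x`, so pivoting on it shows that `B - b + x` is
independent for every `b ∈ B`, i.e. that `B + x` is a circuit.

`P ∪ {e_1, e_2}` is the union of two cycles of gain `2`, one on each layer, and for odd `k`,
`Q ∪ {e_1, e_2}` is a single cycle of gain `4` through all vertices. In both cases the `w_b` are
vertex potentials whose drop `w(u) - γ(e) w(v)` along the basis edges `e` is `1` at `b` and `0`
elsewhere.
-/

open Matrix Function

namespace Matroid

variable {α : Type} {M : Matroid α} {B : Set α}

lemma isCircuit'_iff {C : Set α} : M.IsCircuit' C ↔ M.IsCircuit C := by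
  rw [isCircuit_iff_forall_ssubset, IsCircuit']

lemma IsBase.isFreeBase_of_forall_exchange (hB : M.IsBase B)
    (h : ∀ e ∈ M.E \ B, ∀ f ∈ B, M.Indep (insert e B \ {f})) : M.IsFreeBase B := by
  refine ⟨hB, fun e he => isCircuit'_iff.2 ?_⟩
  refine isCircuit_iff_dep_forall_sdiff_singleton_indep.2 ⟨hB.insert_dep he, fun f hf => ?_⟩
  obtain rfl | hfB := hf
  · rw [insert_sdiff_self_of_notMem he.2]
    exact hB.indep
  · exact h e he f hfB

end Matroid

section ColumnMatroid

variable {m n : Type} [Fintype m] {A : Matrix m n ℝ} {N : Matroid n}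

lemma IsColMatroid.indep_of_dual [DecidableEq n] (hN : IsColMatroid A N) {S : Set n}
    (w : n → m → ℝ) (hw : ∀ s ∈ S, ∀ t ∈ S, (w s ᵥ* A) t = if s = t then 1 else 0) :
    N.Indep S := by
  classical
  rw [hN.2]
  refine LinearIndependent.of_pairwise_dual_eq_zero_one _
    (fun s => dotProductEquiv ℝ m (w s)) (fun s t hst => ?_) (fun s => ?_)
  · exact (hw s s.2 t t.2).trans (if_neg (Subtype.coe_ne_coe.2 hst))
  · exact (hw s s.2 s s.2).trans (if_pos rfl)

lemma IsColMatroid.encard_le_of_indep (hN : IsColMatroid A N) {S : Set n} (hS : N.Indep S) :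
    S.encard ≤ Fintype.card m := by
  rw [hN.2] at hS
  have hfin : S.Finite :=
    Set.finite_coe_iff.1 (Cardinal.lt_aleph0_iff_finite.1 hS.lt_aleph0_of_finite)
  have := hfin.fintype
  rw [← hfin.cast_ncard_eq]
  exact_mod_cast (by simpa using hS.fintype_card_le_finrank)

lemma IsColMatroid.indep_exchange_of_dual [DecidableEq n] (hN : IsColMatroid A N)
    {B : Set n} (w : n → m → ℝ)
    (hdual : ∀ b ∈ B, ∀ e ∈ B, (w b ᵥ* A) e = if b = e then 1 else 0)
    {x f : n} (hx : x ∉ B) (hf : f ∈ B) (hxf : (w f ᵥ* A) x ≠ 0) :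
    N.Indep (insert x B \ {f}) := by
  set c := (w f ᵥ* A) x
  -- Gaussian elimination on the entry `c`
  let w' : n → m → ℝ := fun s =>
    if s = x then c⁻¹ • w f else w s - ((w s ᵥ* A) x / c) • w f
  refine hN.indep_of_dual w' fun s hs t ht => ?_
  obtain ⟨hs, hsf : s ≠ f⟩ := hs
  obtain ⟨ht, htf : t ≠ f⟩ := ht
  rcases hs with rfl | hsB <;> rcases ht with rfl | htB
  · simp [w', smul_vecMul, hxf, c]
  · simp [w', smul_vecMul, hdual f hf t htB, htf.symm, Ne.symm (ne_of_mem_of_not_mem htB hx)]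
  · simp only [w', ne_of_mem_of_not_mem hsB hx, ↓reduceIte, sub_vecMul, smul_vecMul,
      Pi.sub_apply, Pi.smul_apply, smul_eq_mul]
    exact sub_eq_zero.2 (div_mul_cancel₀ _ hxf).symm
  · simp [w', sub_vecMul, smul_vecMul, ne_of_mem_of_not_mem hsB hx, hdual s hsB t htB,
      hdual f hf t htB, htf.symm]

theorem IsColMatroid.isFreeBase_of_dual [DecidableEq n] (hN : IsColMatroid A N) {B : Set n}
    (hcard : (Fintype.card m : ℕ∞) ≤ B.encard) (w : n → m → ℝ)
    (hdual : ∀ b ∈ B, ∀ e ∈ B, (w b ᵥ* A) e = if b = e then 1 else 0)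
    (hfull : ∀ b ∈ B, ∀ x ∉ B, (w b ᵥ* A) x ≠ 0) : N.IsFreeBase B := by
  have hB : N.Indep B := hN.indep_of_dual w hdual
  have hBase : N.IsBase B := hB.isBase_of_forall_insert fun x hx hind => by
    have hBcard : B.encard = Fintype.card m := (hN.encard_le_of_indep hB).antisymm hcard
    have hle := hN.encard_le_of_indep hind
    rw [Set.encard_insert_of_notMem hx.2, hBcard] at hle
    norm_cast at hle
    omega
  exact hBase.isFreeBase_of_forall_exchange fun x hx f hf =>
    hN.indep_exchange_of_dual w hdual hx.2 hf (hfull f hf x hx.2)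

end ColumnMatroid

lemma card_le_encard_of_injective {α β : Type*} [Fintype α] {s : Set β} (g : α → β)
    (hg : Injective g) (hgs : ∀ a, g a ∈ s) : (Fintype.card α : ℕ∞) ≤ s.encard := by
  rw [← ENat.card_eq_coe_fintype_card]
  exact hg.encard_range.trans (encard_le_encard (range_subset_iff.2 hgs))

section EdgeSets

variable {k : ℕ}

lemma compl_Pset_union : (Pset k ∪ {.e1, .e2})ᶜ = Qset k := by
  ext e
  cases e <;> simp [Pset, Qset]

lemma compl_Qset_union : (Qset k ∪ {.e1, .e2})ᶜ = Pset k := by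
  ext e
  cases e <;> simp [Pset, Qset]

lemma card_vertex_le_encard_Pset_union :
    (Fintype.card (Vertex k) : ℕ∞) ≤ (Pset k ∪ {.e1, .e2}).encard := by
  refine card_le_encard_of_injective
    (Sum.elim (fun p => if p.2 then .d p.1 else .a p.1) (fun l => if l then .e2 else .e1))
    ?_ ?_
  · rintro (⟨i, _ | _⟩ | _ | _) (⟨j, _ | _⟩ | _ | _) h <;> simp_all
  · rintro (⟨i, _ | _⟩ | _ | _) <;> simp [Pset]

lemma card_vertex_le_encard_Qset_union :
    (Fintype.card (Vertex k) : ℕ∞) ≤ (Qset k ∪ {.e1, .e2}).encard := by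
  refine card_le_encard_of_injective
    (Sum.elim (fun p => if p.2 then .c p.1 else .b p.1) (fun l => if l then .e2 else .e1))
    ?_ ?_
  · rintro (⟨i, _ | _⟩ | _ | _) (⟨j, _ | _⟩ | _ | _) h <;> simp_all
  · rintro (⟨i, _ | _⟩ | _ | _) <;> simp [Qset]

end EdgeSets

section Certificates

variable {k : ℕ} [NeZero k]

lemma Fin.add_one_eq_zero_iff_not_lt (i : Fin k) : i + 1 = 0 ↔ ¬ i.val + 1 < k := by
  constructor
  · intro h hlt
    have := congrArg Fin.val h
    rw [Fin.val_add_one_of_lt' hlt, Fin.val_zero] at this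
    omega
  · intro h
    rw [Fin.ext_iff, Fin.val_add, Fin.val_one', Nat.add_mod_mod, Fin.val_zero,
      show i.val + 1 = k by omega, Nat.mod_self]

lemma Edge.tail_ne_head (e : Edge k) : e.tail ≠ e.head := by
  have hnext : ∀ (i : Fin k) (l l' : Bool),
      (Sum.inl (i, l) : Vertex k) ≠ if i + 1 = 0 then .inr l' else .inl (i + 1, l') := by
    intro i l l'
    split_ifs with h
    · exact Sum.inl_ne_inr
    · rw [Fin.add_one_eq_zero_iff_not_lt, not_not] at h
      rw [Ne, Sum.inl.injEq, Prod.mk.injEq, not_and]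
      intro hi
      have := congrArg Fin.val hi
      rw [Fin.val_add_one_of_lt' h] at this
      omega
  cases e <;> first | exact hnext _ _ _ | simp [Edge.tail, Edge.head]

lemma vecMul_frameMatrix (w : Vertex k → ℝ) (e : Edge k) :
    (w ᵥ* frameMatrix k) e = w e.tail - gammaF e * w e.head := by
  have hne := e.tail_ne_head
  rw [vecMul, dotProduct, Fintype.sum_eq_add e.tail e.head hne fun v hv => by
    simp [frameMatrix, hv.1, hv.2]]
  simp only [frameMatrix, ↓reduceIte, hne.symm, mul_one, mul_neg]
  ring

/-- The value of `w ᵥ* frameMatrix k` on the edge from position `i` of layer `l` to position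
`i + 1` of layer `l'` (`false` is the `x`-layer; position `k` is `t_1`, `t_2`, and only the edges
into it carry the label `2`). -/
noncomputable def stepDrop (w : Vertex k → ℝ) (i : Fin k) (l l' : Bool) : ℝ :=
  if h : i.val + 1 < k then w (.inl (i, l)) - w (.inl (⟨i.val + 1, h⟩, l'))
  else w (.inl (i, l)) - 2 * w (.inr l')

lemma sub_gamma_mul_next_eq_stepDrop (w : Vertex k → ℝ) (i : Fin k) (l l' : Bool) :
    w (.inl (i, l)) - (if i = lastIdx k then 2 else 1) *
      w (if i + 1 = 0 then .inr l' else .inl (i + 1, l')) = stepDrop w i l l' := by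
  have hlast : i = lastIdx k ↔ ¬ i.val + 1 < k := by
    rw [Fin.ext_iff]
    have := i.isLt
    change i.val = k - 1 ↔ _
    omega
  simp only [stepDrop, Fin.add_one_eq_zero_iff_not_lt, hlast]
  split_ifs with h
  · rw [one_mul]
    congr
    exact Fin.ext (Fin.val_add_one_of_lt' h)
  · rfl

lemma vecMul_frameMatrix_a (w : Vertex k → ℝ) (i : Fin k) :
    (w ᵥ* frameMatrix k) (.a i) = stepDrop w i false false :=
  (vecMul_frameMatrix w _).trans (sub_gamma_mul_next_eq_stepDrop w i false false)

lemma vecMul_frameMatrix_b (w : Vertex k → ℝ) (i : Fin k) :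
    (w ᵥ* frameMatrix k) (.b i) = stepDrop w i false true :=
  (vecMul_frameMatrix w _).trans (sub_gamma_mul_next_eq_stepDrop w i false true)

lemma vecMul_frameMatrix_c (w : Vertex k → ℝ) (i : Fin k) :
    (w ᵥ* frameMatrix k) (.c i) = stepDrop w i true false :=
  (vecMul_frameMatrix w _).trans (sub_gamma_mul_next_eq_stepDrop w i true false)

lemma vecMul_frameMatrix_d (w : Vertex k → ℝ) (i : Fin k) :
    (w ᵥ* frameMatrix k) (.d i) = stepDrop w i true true :=
  (vecMul_frameMatrix w _).trans (sub_gamma_mul_next_eq_stepDrop w i true true)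

lemma vecMul_frameMatrix_e1 (w : Vertex k → ℝ) :
    (w ᵥ* frameMatrix k) .e1 = w (.inl (0, false)) - w (.inr false) :=
  (vecMul_frameMatrix w _).trans (by simp [Edge.tail, Edge.head, gammaF])

lemma vecMul_frameMatrix_e2 (w : Vertex k → ℝ) :
    (w ᵥ* frameMatrix k) .e2 = w (.inl (0, true)) - w (.inr true) :=
  (vecMul_frameMatrix w _).trans (by simp [Edge.tail, Edge.head, gammaF])

noncomputable def dualP : Edge k → Vertex k → ℝ
  | .a m => fun
    | .inl (j, false) => if m.val < j.val then -2 else -1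
    | .inl (_, true) => 0
    | .inr false => -1
    | .inr true => 0
  | .d m => fun
    | .inl (_, false) => 0
    | .inl (j, true) => if m.val < j.val then -2 else -1
    | .inr false => 0
    | .inr true => -1
  | .e1 => fun
    | .inl (_, false) => 2
    | .inl (_, true) => 0
    | .inr false => 1
    | .inr true => 0
  | .e2 => fun
    | .inl (_, false) => 0
    | .inl (_, true) => 2
    | .inr false => 0
    | .inr true => 1
  | _ => 0

lemma dualP_isDual : ∀ b ∈ Pset k ∪ {.e1, .e2}, ∀ e ∈ Pset k ∪ {.e1, .e2},
    (dualP b ᵥ* frameMatrix k) e = if b = e then 1 else 0 := by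
  intro b hb e he
  simp only [Pset, mem_union, mem_ofPred_eq, mem_insert_iff, mem_singleton_iff] at hb he
  obtain ⟨m, rfl | rfl⟩ | rfl | rfl := hb <;> obtain ⟨i, rfl | rfl⟩ | rfl | rfl := he <;>
    simp only [vecMul_frameMatrix_a, vecMul_frameMatrix_d, vecMul_frameMatrix_e1,
      vecMul_frameMatrix_e2, stepDrop, dualP, Edge.a.injEq, Edge.d.injEq, ← Fin.val_inj,
      reduceCtorEq, ↓reduceIte, Fin.val_zero]
  all_goals try split_ifs
  all_goals first | omega | norm_num

lemma dualP_ne_zero : ∀ b ∈ Pset k ∪ {.e1, .e2}, ∀ x ∉ Pset k ∪ {.e1, .e2},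
    (dualP b ᵥ* frameMatrix k) x ≠ 0 := by
  intro b hb x hx
  rw [← mem_compl_iff, compl_Pset_union] at hx
  simp only [Pset, mem_union, mem_ofPred_eq, mem_insert_iff, mem_singleton_iff] at hb
  obtain ⟨m, rfl | rfl⟩ | rfl | rfl := hb <;> obtain ⟨i, rfl | rfl⟩ := hx <;>
    simp only [vecMul_frameMatrix_b, vecMul_frameMatrix_c, stepDrop, dualP]
  all_goals split_ifs <;> first | omega | norm_num

-- The denominators are `4 - 1`, from the gain `4` of the cycle `Q ∪ {e_1, e_2}`.
noncomputable def dualQ : Edge k → Vertex k → ℝ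
  | .b m => fun
    | .inl (j, false) =>
        if j.val % 2 = m.val % 2 then (if j.val ≤ m.val then -1/3 else -4/3) else -2/3
    | .inl (j, true) =>
        if j.val % 2 = m.val % 2 then -2/3 else (if j.val ≤ m.val then -1/3 else -4/3)
    | .inr false => if m.val % 2 = 0 then -1/3 else -2/3
    | .inr true => if m.val % 2 = 0 then -2/3 else -1/3
  | .c m => fun
    | .inl (j, false) =>
        if j.val % 2 = m.val % 2 then -2/3 else (if j.val ≤ m.val then -1/3 else -4/3)
    | .inl (j, true) =>
        if j.val % 2 = m.val % 2 then (if j.val ≤ m.val then -1/3 else -4/3) else -2/3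
    | .inr false => if m.val % 2 = 0 then -2/3 else -1/3
    | .inr true => if m.val % 2 = 0 then -1/3 else -2/3
  | .e1 => fun
    | .inl (j, false) => if j.val % 2 = 0 then 4/3 else 2/3
    | .inl (j, true) => if j.val % 2 = 0 then 2/3 else 4/3
    | .inr false => 1/3
    | .inr true => 2/3
  | .e2 => fun
    | .inl (j, false) => if j.val % 2 = 0 then 2/3 else 4/3
    | .inl (j, true) => if j.val % 2 = 0 then 4/3 else 2/3
    | .inr false => 2/3
    | .inr true => 1/3
  | _ => 0

lemma dualQ_isDual (hodd : Odd k) :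
    ∀ b ∈ Qset k ∪ {.e1, .e2}, ∀ e ∈ Qset k ∪ {.e1, .e2},
      (dualQ b ᵥ* frameMatrix k) e = if b = e then 1 else 0 := by
  have hk := Nat.odd_iff.1 hodd
  intro b hb e he
  simp only [Qset, mem_union, mem_ofPred_eq, mem_insert_iff, mem_singleton_iff] at hb he
  obtain ⟨m, rfl | rfl⟩ | rfl | rfl := hb <;> obtain ⟨i, rfl | rfl⟩ | rfl | rfl := he <;>
    simp only [vecMul_frameMatrix_b, vecMul_frameMatrix_c, vecMul_frameMatrix_e1,
      vecMul_frameMatrix_e2, stepDrop, dualQ, Edge.b.injEq, Edge.c.injEq, ← Fin.val_inj,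
      reduceCtorEq, ↓reduceIte, Fin.val_zero, Nat.zero_mod, eq_comm (a := 0)]
  all_goals try split_ifs
  all_goals first | omega | norm_num

lemma dualQ_ne_zero (hodd : Odd k) :
    ∀ b ∈ Qset k ∪ {.e1, .e2}, ∀ x ∉ Qset k ∪ {.e1, .e2},
      (dualQ b ᵥ* frameMatrix k) x ≠ 0 := by
  have hk := Nat.odd_iff.1 hodd
  intro b hb x hx
  rw [← mem_compl_iff, compl_Qset_union] at hx
  simp only [Qset, mem_union, mem_ofPred_eq, mem_insert_iff, mem_singleton_iff] at hb
  obtain ⟨m, rfl | rfl⟩ | rfl | rfl := hb <;> obtain ⟨i, rfl | rfl⟩ := hx <;>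
    simp only [vecMul_frameMatrix_a, vecMul_frameMatrix_d, stepDrop, dualQ]
  all_goals split_ifs <;> first | omega | norm_num

end Certificates

theorem free_bases_of_Nk_general (k : ℕ) [NeZero k] (hodd : Odd k)
    (N : Matroid (Edge k)) (hN : IsColMatroid (frameMatrix k) N) :
    N.IsFreeBase (Pset k ∪ {Edge.e1, Edge.e2}) ∧
    N.IsFreeBase (Qset k ∪ {Edge.e1, Edge.e2}) :=
  ⟨hN.isFreeBase_of_dual card_vertex_le_encard_Pset_union dualP dualP_isDual dualP_ne_zero,
    hN.isFreeBase_of_dual card_vertex_le_encard_Qset_union dualQ (dualQ_isDual hodd)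
      (dualQ_ne_zero hodd)⟩

/-- Both `P ∪ {e_1, e_2}` and `Q ∪ {e_1, e_2}` are free bases of the matroid `N_k`. -/
theorem free_bases_of_Nk (k : ℕ) [NeZero k] (hk : 7 ≤ k) (hodd : Odd k)
    (N : Matroid (Edge k)) (hN : IsColMatroid (frameMatrix k) N) :
    N.IsFreeBase (Pset k ∪ {Edge.e1, Edge.e2}) ∧
    N.IsFreeBase (Qset k ∪ {Edge.e1, Edge.e2}) :=
  free_bases_of_Nk_general k hodd N hN
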